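/- For a fixed real number k > 0 and coprime positive integers m, n, we have π_k(x; m, n) − π(x^{k+1}; m, n) = O(x^{k+1} exp(−(α/2)√(log x))) as x → ∞, where α is the positive constant from the prime number theorem for arithmetic progressions. -/

import Mathlib

/-!
Abel summation gives `π_k(x) = x^k π(x) - ∫₂^x k t^(k-1) π(t) dt`. Its smooth counterpart, with `π`
replaced by `Li / φ(m)`, equals `Li(x^(k+1)) / φ(m)` up to an additive constant, since both sides
have derivative `x^k / log x / φ(m)`. So, up to a constant, `π_k(x) - π(x^(k+1))` is made of the
error `E = π - Li / φ(m)` at `x` and at `x^(k+1)`, which the hypothesis bounds directly, and of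
`∫₂^x k t^(k-1) E(t) dt`. That integral is compared with `u(x) = x^(k+1) exp(-c √(log x))`:
eventually `u'(t) ≥ (k+1)/2 · t^k exp(-c √(log t))`.
-/

open Real Filter Finset

/-- The finset of primes `p ≤ x` with `p ≡ n (mod m)`. -/
noncomputable def primesTo (x : ℝ) (m n : ℕ) : Finset ℕ :=
  (Finset.range (⌊x⌋₊ + 1)).filter fun p => p.Prime ∧ p % m = n % m

/-- `π(x; m, n)`, the number of primes `p ≤ x` with `p ≡ n (mod m)`. -/
noncomputable def piCount (x : ℝ) (m n : ℕ) : ℝ := (primesTo x m n).card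

/-- `π_k(x; m, n) = Σ_{p ≤ x, p ≡ n (mod m)} p^k`. -/
noncomputable def piPow (k x : ℝ) (m n : ℕ) : ℝ :=
  ∑ p ∈ primesTo x m n, (p : ℝ) ^ k

open MeasureTheory Asymptotics Set Topology

lemma continuousOn_rpow_Ioi (p : ℝ) : ContinuousOn (fun t : ℝ => t ^ p) (Ioi 0) :=
  continuousOn_id.rpow_const fun _ ht => Or.inl (ne_of_gt ht)

lemma hasDerivAt_integral_of_continuousOn {f : ℝ → ℝ} {s : Set ℝ} {a b : ℝ} (hs : IsOpen s)
    (hs' : s.OrdConnected) (hf : ContinuousOn f s) (ha : a ∈ s) (hb : b ∈ s) :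
    HasDerivAt (fun x => ∫ t in a..x, f t) (f b) b :=
  intervalIntegral.integral_hasDerivAt_right
    ((hf.mono (hs'.uIcc_subset ha hb)).intervalIntegrable) (hf.stronglyMeasurableAtFilter hs b hb)
    (hf.continuousAt (hs.mem_nhds hb))

section PrimeSums

variable (m n : ℕ)

lemma piCount_eq_sum_Icc (x : ℝ) :
    piCount x m n = ∑ p ∈ Icc 0 ⌊x⌋₊, if p.Prime ∧ p % m = n % m then (1 : ℝ) else 0 := by
  rw [piCount, primesTo, ← Nat.range_succ_eq_Icc_zero, sum_boole]

lemma piPow_eq_sum_Icc (k x : ℝ) :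
    piPow k x m n = ∑ p ∈ Icc 0 ⌊x⌋₊,
      (p : ℝ) ^ k * if p.Prime ∧ p % m = n % m then (1 : ℝ) else 0 := by
  rw [piPow, primesTo, ← Nat.range_succ_eq_Icc_zero, sum_filter]
  simp only [mul_ite, mul_one, mul_zero]

lemma piCount_mono : Monotone fun x => piCount x m n := fun _ _ hxy =>
  Nat.cast_le.mpr <| card_le_card <| filter_subset_filter _ <|
    range_subset_range.mpr (Nat.succ_le_succ (Nat.floor_le_floor hxy))

theorem piPow_eq_sub_integral (k : ℝ) {x : ℝ} (hx : 2 ≤ x) :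
    piPow k x m n
      = x ^ k * piCount x m n - ∫ t in (2 : ℝ)..x, k * t ^ (k - 1) * piCount t m n := by
  have hderiv : deriv (fun t : ℝ => t ^ k) = fun t => k * t ^ (k - 1) :=
    funext fun t => Real.deriv_rpow_const t k
  have hpos : ∀ t ∈ Icc (2 : ℝ) x, 0 < t := fun t ht => by linarith [ht.1]
  have abel := sum_mul_eq_sub_integral_mul₁ (f := fun t : ℝ => t ^ k)
    (fun p => if p.Prime ∧ p % m = n % m then (1 : ℝ) else 0) (by simp [Nat.not_prime_zero])
    (by simp [Nat.not_prime_one]) x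
    (fun t ht => (Real.hasDerivAt_rpow_const (Or.inl (hpos t ht).ne')).differentiableAt)
    (hderiv ▸ (continuousOn_const.mul ((continuousOn_rpow_Ioi _).mono hpos)).integrableOn_Icc)
  beta_reduce at abel
  rw [piPow_eq_sum_Icc, abel, hderiv, ← intervalIntegral.integral_of_le hx]
  simp_rw [← piCount_eq_sum_Icc]

end PrimeSums

noncomputable def logIntegral (x : ℝ) : ℝ := ∫ t in (2 : ℝ)..x, 1 / log t

section LogIntegral

lemma continuousOn_one_div_log : ContinuousOn (fun t : ℝ => 1 / log t) (Ioi 1) :=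
  continuousOn_const.div (continuousOn_log.mono fun _ ht => (zero_lt_one.trans ht).ne')
    fun _ ht => (log_pos ht).ne'

lemma hasDerivAt_logIntegral {t : ℝ} (ht : 1 < t) : HasDerivAt logIntegral (1 / log t) t :=
  hasDerivAt_integral_of_continuousOn isOpen_Ioi ordConnected_Ioi continuousOn_one_div_log
    (Set.mem_Ioi.2 one_lt_two) ht

lemma continuousOn_mul_logIntegral (k : ℝ) :
    ContinuousOn (fun t => k * t ^ (k - 1) * logIntegral t) (Ioi 1) :=
  (continuousOn_const.mul ((continuousOn_rpow_Ioi _).mono (Ioi_subset_Ioi zero_le_one))).mul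
    fun _ ht => (hasDerivAt_logIntegral ht).continuousAt.continuousWithinAt

theorem rpow_mul_logIntegral_sub_integral {k x : ℝ} (hk : -1 < k) (hx : 2 ≤ x) :
    x ^ k * logIntegral x - ∫ t in (2 : ℝ)..x, k * t ^ (k - 1) * logIntegral t
      = logIntegral (x ^ (k + 1)) - logIntegral (2 ^ (k + 1)) := by
  set F : ℝ → ℝ := fun y => y ^ k * logIntegral y
    - (∫ t in (2 : ℝ)..y, k * t ^ (k - 1) * logIntegral t) - logIntegral (y ^ (k + 1))
  have hF : ∀ y, 1 < y → HasDerivAt F 0 y := by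
    intro y hy
    have hy0 : 0 < y := by linarith
    have hpow : HasDerivAt (fun y : ℝ => y ^ (k + 1)) ((k + 1) * y ^ k) y := by
      simpa using Real.hasDerivAt_rpow_const (p := k + 1) (Or.inl hy0.ne')
    have hF' := (((Real.hasDerivAt_rpow_const (p := k) (Or.inl hy0.ne')).mul
      (hasDerivAt_logIntegral hy)).sub
      (hasDerivAt_integral_of_continuousOn isOpen_Ioi ordConnected_Ioi
        (continuousOn_mul_logIntegral k) (Set.mem_Ioi.2 one_lt_two) hy)).sub
      (HasDerivAt.comp (h := fun y : ℝ => y ^ (k + 1)) y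
        (hasDerivAt_logIntegral (Real.one_lt_rpow hy (by linarith))) hpow)
    refine HasDerivAt.congr_deriv (f := F) hF' ?_
    have hlog : log y ≠ 0 := (log_pos hy).ne'
    have hk1 : k + 1 ≠ 0 := by linarith
    rw [Real.log_rpow hy0]
    field_simp
    ring
  have hconst := constant_of_has_deriv_right_zero (f := F) (a := 2) (b := x)
    (fun y hy => (hF y (by linarith [hy.1])).continuousAt.continuousWithinAt)
    (fun y hy => (hF y (by linarith [hy.1])).hasDerivWithinAt) x ⟨hx, le_rfl⟩
  have hLi2 : logIntegral 2 = 0 := intervalIntegral.integral_same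
  simp only [F, hLi2, intervalIntegral.integral_same] at hconst
  linarith

end LogIntegral

noncomputable def piError (m n : ℕ) (x : ℝ) : ℝ :=
  piCount x m n - 1 / (Nat.totient m : ℝ) * logIntegral x

section PiError

variable (k : ℝ) (m n : ℕ)

lemma intervalIntegrable_mul_piCount {a b : ℝ} (ha : 0 < a) (hb : 0 < b) :
    IntervalIntegrable (fun t => k * t ^ (k - 1) * piCount t m n) volume a b :=
  (piCount_mono m n).intervalIntegrable.continuousOn_mul <|
    (continuousOn_const.mul (continuousOn_rpow_Ioi _)).mono (ordConnected_Ioi.uIcc_subset ha hb)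

lemma intervalIntegrable_mul_logIntegral {a b : ℝ} (ha : 1 < a) (hb : 1 < b) :
    IntervalIntegrable (fun t => k * t ^ (k - 1) * logIntegral t) volume a b :=
  ((continuousOn_mul_logIntegral k).mono (ordConnected_Ioi.uIcc_subset ha hb)).intervalIntegrable

lemma intervalIntegral_mul_piError {a b : ℝ} (ha : 1 < a) (hb : 1 < b) :
    ∫ t in a..b, k * t ^ (k - 1) * piError m n t
      = (∫ t in a..b, k * t ^ (k - 1) * piCount t m n)
        - 1 / (Nat.totient m : ℝ) * ∫ t in a..b, k * t ^ (k - 1) * logIntegral t := by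
  rw [← intervalIntegral.integral_const_mul, ← intervalIntegral.integral_sub
    (intervalIntegrable_mul_piCount k m n (by linarith) (by linarith))
    ((intervalIntegrable_mul_logIntegral k ha hb).const_mul _)]
  refine intervalIntegral.integral_congr fun t _ => ?_
  simp only [piError]
  ring

lemma intervalIntegrable_mul_piError {a b : ℝ} (ha : 1 < a) (hb : 1 < b) :
    IntervalIntegrable (fun t => k * t ^ (k - 1) * piError m n t) volume a b := by
  convert (intervalIntegrable_mul_piCount k m n (by linarith) (by linarith)).sub
    ((intervalIntegrable_mul_logIntegral k ha hb).const_mul (1 / (Nat.totient m : ℝ))) using 1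
  funext t
  simp only [piError]
  ring

theorem piPow_sub_piCount_rpow_eq {k : ℝ} (hk : -1 < k) {x : ℝ} (hx : 2 ≤ x) :
    piPow k x m n - piCount (x ^ (k + 1)) m n
      = x ^ k * piError m n x - (∫ t in (2 : ℝ)..x, k * t ^ (k - 1) * piError m n t)
        - piError m n (x ^ (k + 1)) - 1 / (Nat.totient m : ℝ) * logIntegral (2 ^ (k + 1)) := by
  rw [piPow_eq_sub_integral m n k hx, intervalIntegral_mul_piError k m n one_lt_two (by linarith)]
  simp only [piError]
  linear_combination (1 / (Nat.totient m : ℝ)) * rpow_mul_logIntegral_sub_integral hk hx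

end PiError

theorem isBigO_intervalIntegral_of_isBigO_deriv {f u u' : ℝ → ℝ} {a : ℝ}
    (hf : ∀ b ≥ a, IntervalIntegrable f volume a b)
    (hu : ∀ᶠ t in atTop, HasDerivAt u (u' t) t) (hu' : ∀ᶠ t in atTop, 0 ≤ u' t)
    (hfu : f =O[atTop] u') (hu1 : (fun _ => (1 : ℝ)) =O[atTop] u) :
    (fun x => ∫ t in a..x, f t) =O[atTop] u := by
  obtain ⟨C, hC0, hC⟩ := hfu.exists_nonneg
  obtain ⟨T, hT⟩ := eventually_atTop.1 (((hu.and hu').and hC.bound).and (eventually_ge_atTop a))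
  have haT : a ≤ T := (hT T le_rfl).2
  have hderiv : ∀ t ≥ T, HasDerivAt u (u' t) t := fun t ht => (hT t ht).1.1.1
  have hbound : ∀ t ≥ T, ‖f t‖ ≤ C * u' t := fun t ht => by
    obtain ⟨⟨⟨-, hu't⟩, hft⟩, -⟩ := hT t ht
    rwa [norm_of_nonneg hu't] at hft
  have hfT : ∀ x ≥ T, IntervalIntegrable f volume T x := fun x hx =>
    (hf x (haT.trans hx)).mono_set (uIcc_subset_uIcc_right (mem_uIcc_of_le haT hx))
  have htail : (fun x => ∫ t in T..x, f t) =O[atTop] fun x => u x - u T := by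
    refine IsBigO.of_bound C ?_
    filter_upwards [eventually_ge_atTop T] with x hx
    have hle : ∫ t in T..x, ‖f t‖ ≤ C * u x - C * u T :=
      intervalIntegral.integral_le_sub_of_hasDeriv_right_of_le (g := fun y => C * u y)
        (g' := fun y => C * u' y) hx
        (fun y hy => ((hderiv y hy.1).const_mul C).continuousAt.continuousWithinAt)
        (fun y hy => ((hderiv y hy.1.le).const_mul C).hasDerivWithinAt)
        ((intervalIntegrable_iff_integrableOn_Icc_of_le hx).mp (hfT x hx).norm)
        fun y hy => hbound y hy.1.le
    calc ‖∫ t in T..x, f t‖ ≤ ∫ t in T..x, ‖f t‖ :=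
          intervalIntegral.norm_integral_le_integral_norm hx
      _ ≤ C * (u x - u T) := by linarith
      _ ≤ C * ‖u x - u T‖ := mul_le_mul_of_nonneg_left (le_norm_self _) hC0
  have hconst : ∀ b : ℝ, (fun _ : ℝ => b) =O[atTop] u := fun b =>
    (isBigO_const_one ℝ b atTop).trans hu1
  have hsplit : (fun x => ∫ t in a..x, f t)
      =ᶠ[atTop] fun x => (∫ t in a..T, f t) + ∫ t in T..x, f t := by
    filter_upwards [eventually_ge_atTop T] with x hx
    exact (intervalIntegral.integral_add_adjacent_intervals (hf T haT) (hfT x hx)).symm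
  exact hsplit.trans_isBigO ((hconst _).add (htail.trans ((isBigO_refl u atTop).sub (hconst _))))

section SqrtLogDecay

variable {c : ℝ}

lemma hasDerivAt_rpow_mul_exp_neg_sqrt_log {k t : ℝ} (ht : 1 < t) :
    HasDerivAt (fun x : ℝ => x ^ (k + 1) * exp (-c * √(log x)))
      (t ^ k * exp (-c * √(log t)) * (k + 1 - c / (2 * √(log t)))) t := by
  have ht0 : 0 < t := by linarith
  have hL : 0 < √(log t) := sqrt_pos.mpr (log_pos ht)
  have hpow : HasDerivAt (fun x : ℝ => x ^ (k + 1)) ((k + 1) * t ^ k) t := by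
    simpa using Real.hasDerivAt_rpow_const (p := k + 1) (Or.inl ht0.ne')
  have hexp := (((hasDerivAt_sqrt (log_pos ht).ne').comp t (hasDerivAt_log ht0.ne')).const_mul
    (-c)).exp
  refine (hpow.mul hexp).congr_deriv ?_
  simp only [Function.comp_apply]
  rw [rpow_add_one ht0.ne']
  field_simp
  ring

lemma eventually_half_le_sub_div_sqrt_log {p : ℝ} (hp : 0 < p) :
    ∀ᶠ t in atTop, p / 2 ≤ p - c / (2 * √(log t)) := by
  have h : Tendsto (fun t => c / (2 * √(log t))) atTop (𝓝 0) :=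
    tendsto_const_nhds.div_atTop ((tendsto_sqrt_atTop.comp tendsto_log_atTop).const_mul_atTop
      two_pos)
  filter_upwards [h.eventually_lt_const (half_pos hp)] with t ht
  linarith

lemma isBigO_one_rpow_mul_exp_neg_sqrt_log {p : ℝ} (hp : 0 < p) :
    (fun _ => (1 : ℝ)) =O[atTop] fun x => x ^ p * exp (-c * √(log x)) := by
  refine IsBigO.of_bound' ?_
  filter_upwards [eventually_gt_atTop 0, tendsto_log_atTop.eventually_ge_atTop ((c / p) ^ 2)]
    with x hx hlog
  have hL : c / p ≤ √(log x) := (le_abs_self _).trans (abs_le_sqrt hlog)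
  have hlog0 : 0 ≤ log x := (sq_nonneg _).trans hlog
  rw [norm_one, norm_of_nonneg (by positivity), rpow_def_of_pos hx, ← exp_add]
  refine one_le_exp ?_
  rw [div_le_iff₀ hp] at hL
  nlinarith [sq_sqrt hlog0, sqrt_nonneg (log x)]

lemma exp_neg_mul_sqrt_log_rpow_le {p x : ℝ} (hc : 0 ≤ c) (hp : 1 ≤ p) (hx : 1 ≤ x) :
    exp (-c * √(log (x ^ p))) ≤ exp (-c * √(log x)) := by
  rw [exp_le_exp, log_rpow (by linarith)]
  have : √(log x) ≤ √(p * log x) := sqrt_le_sqrt (by nlinarith [log_nonneg hx])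
  nlinarith

variable {E : ℝ → ℝ}

lemma rpow_mul_isBigO (hE : E =O[atTop] fun t => t * exp (-c * √(log t))) (k : ℝ) :
    (fun x => x ^ k * E x) =O[atTop] fun x => x ^ (k + 1) * exp (-c * √(log x)) :=
  ((isBigO_refl (fun x : ℝ => x ^ k) atTop).mul hE).trans_eventuallyEq <| by
    filter_upwards [eventually_gt_atTop 0] with x hx
    rw [rpow_add_one hx.ne', mul_assoc]

lemma comp_rpow_isBigO (hE : E =O[atTop] fun t => t * exp (-c * √(log t))) {p : ℝ} (hc : 0 ≤ c)
    (hp : 1 ≤ p) :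
    (fun x => E (x ^ p)) =O[atTop] fun x => x ^ p * exp (-c * √(log x)) :=
  (hE.comp_tendsto (tendsto_rpow_atTop (by linarith))).trans <| IsBigO.of_bound' <| by
    filter_upwards [eventually_ge_atTop 1] with x hx
    have hxp : 0 < x ^ p := rpow_pos_of_pos (by linarith) p
    rw [Function.comp_apply, norm_of_nonneg (by positivity), norm_of_nonneg (by positivity)]
    exact mul_le_mul_of_nonneg_left (exp_neg_mul_sqrt_log_rpow_le hc hp hx) hxp.le

theorem intervalIntegral_rpow_mul_isBigO (hE : E =O[atTop] fun t => t * exp (-c * √(log t)))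
    {k a : ℝ} (hk : -1 < k)
    (hint : ∀ b ≥ a, IntervalIntegrable (fun t => k * t ^ (k - 1) * E t) volume a b) :
    (fun x => ∫ t in a..x, k * t ^ (k - 1) * E t)
      =O[atTop] fun x => x ^ (k + 1) * exp (-c * √(log x)) := by
  have hk1 : 0 < k + 1 := by linarith
  set v : ℝ → ℝ := fun t => t ^ k * exp (-c * √(log t))
  have hfv : (fun t => k * t ^ (k - 1) * E t) =O[atTop] v :=
    ((isBigO_const_mul_self k _ atTop).mul hE).trans_eventuallyEq <| by
      filter_upwards [eventually_gt_atTop 0] with t ht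
      rw [← mul_assoc, ← rpow_add_one ht.ne', sub_add_cancel]
  have hvu : ∀ᶠ t in atTop,
      0 ≤ v t ∧ (k + 1) / 2 * v t ≤ v t * (k + 1 - c / (2 * √(log t))) := by
    filter_upwards [eventually_half_le_sub_div_sqrt_log hk1, eventually_gt_atTop 0] with t h ht
    have hv : 0 ≤ v t := by positivity
    exact ⟨hv, by rw [mul_comm]; exact mul_le_mul_of_nonneg_left h hv⟩
  refine isBigO_intervalIntegral_of_isBigO_deriv hint
    ((eventually_gt_atTop 1).mono fun t ht => hasDerivAt_rpow_mul_exp_neg_sqrt_log ht) ?_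
    (hfv.trans (IsBigO.of_bound (2 / (k + 1)) ?_)) (isBigO_one_rpow_mul_exp_neg_sqrt_log hk1)
  · filter_upwards [hvu] with t ⟨hv, h⟩
    nlinarith
  · filter_upwards [hvu] with t ⟨hv, h⟩
    rw [norm_of_nonneg hv, norm_of_nonneg (by nlinarith), div_mul_eq_mul_div,
      le_div_iff₀ hk1]
    linarith

end SqrtLogDecay

theorem stmt_1_general (k : ℝ) (hk : k > 0) (m n : ℕ) (α : ℝ) (hα : 0 < α)
    (hPNT : (fun x => piCount x m n - (1 / (Nat.totient m : ℝ)) * ∫ t in (2:ℝ)..x, 1 / Real.log t)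
        =O[atTop] fun x => x * Real.exp (-(α / 2) * Real.sqrt (Real.log x))) :
    (fun x : ℝ => piPow k x m n - piCount (x ^ (k + 1)) m n)
      =O[atTop] fun x => x ^ (k + 1) * Real.exp (-(α / 2) * Real.sqrt (Real.log x)) := by
  have hE : piError m n =O[atTop] fun x => x * exp (-(α / 2) * √(log x)) := hPNT
  have hk1 : -1 < k := by linarith
  have hdecomp : (fun x => piPow k x m n - piCount (x ^ (k + 1)) m n) =ᶠ[atTop] fun x =>
      x ^ k * piError m n x - (∫ t in (2 : ℝ)..x, k * t ^ (k - 1) * piError m n t)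
        - piError m n (x ^ (k + 1)) - 1 / (Nat.totient m : ℝ) * logIntegral (2 ^ (k + 1)) :=
    (eventually_ge_atTop 2).mono fun x hx => piPow_sub_piCount_rpow_eq m n hk1 hx
  have hconst :=
    (isBigO_const_one ℝ (1 / (Nat.totient m : ℝ) * logIntegral (2 ^ (k + 1))) atTop).trans
      (isBigO_one_rpow_mul_exp_neg_sqrt_log (c := α / 2) (by linarith : 0 < k + 1))
  exact hdecomp.trans_isBigO ((((rpow_mul_isBigO hE k).sub
    (intervalIntegral_rpow_mul_isBigO hE hk1 fun b hb =>
      intervalIntegrable_mul_piError k m n one_lt_two (by linarith))).sub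
    (comp_rpow_isBigO hE (by positivity) (by linarith))).sub hconst)

theorem stmt_1 (k : ℝ) (hk : k > 0) (m n : ℕ) (hm : 0 < m) (hn : 0 < n)
    (hmn : Nat.Coprime m n) (α : ℝ) (hα : 0 < α)
    (hPNT : (fun x => piCount x m n - (1 / (Nat.totient m : ℝ)) * ∫ t in (2:ℝ)..x, 1 / Real.log t)
        =O[atTop] fun x => x * Real.exp (-(α / 2) * Real.sqrt (Real.log x))) :
    (fun x : ℝ => piPow k x m n - piCount (x ^ (k + 1)) m n)
      =O[atTop] fun x => x ^ (k + 1) * Real.exp (-(α / 2) * Real.sqrt (Real.log x)) :=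
  stmt_1_general k hk m n α hα hPNT
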